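/- Let p be a prime and t ≥ 1, K ≥ 1 integers. Then Φ(K,K,p^t) = p^{t−1}; that is, the maximum possible minimum Lee distance of a rank-K linear code of length K over ℤ_{p^t} equals p^{t−1}. -/

import Mathlib

/-- Lee weight of an element of `ZMod q`. -/
noncomputable def leeWt {q : ℕ} (a : ZMod q) : ℕ := min (ZMod.val a) (q - ZMod.val a)

/-- Lee weight of a vector over `ZMod q`. -/
noncomputable def leeWtVec {q n : ℕ} (x : Fin n → ZMod q) : ℕ := ∑ i, leeWt (x i)

/-- Minimum Lee distance (= minimum Lee weight of a nonzero codeword) of a linear code. -/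
noncomputable def minLee {q n : ℕ} (C : Submodule (ZMod q) (Fin n → ZMod q)) : ℕ :=
  sInf {w | ∃ x ∈ C, x ≠ 0 ∧ leeWtVec x = w}

/-- Minimum Hamming distance (= minimum Hamming weight of a nonzero codeword). -/
noncomputable def minHam {q n : ℕ} (C : Submodule (ZMod q) (Fin n → ZMod q)) : ℕ :=
  sInf {w | ∃ x ∈ C, x ≠ 0 ∧ hammingNorm x = w}

/-- Average nonzero Lee weight of `ZMod q`. -/
noncomputable def mu (q : ℕ) : ℚ :=
  if Even q then (q : ℚ)^2 / (4 * ((q : ℚ) - 1)) else ((q : ℚ) + 1) / 4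

/-- `Phi n k p`: the maximum minimum Lee distance over `k`-dimensional linear codes
of length `n` over `ZMod p`. -/
noncomputable def Phi (n k p : ℕ) : ℕ :=
  sSup {d | ∃ C : Submodule (ZMod p) (Fin n → ZMod p),
    Module.finrank (ZMod p) ↥C = k ∧ minLee C = d}

/-- Rank of a linear code over `ZMod q`: minimal number of generators. -/
noncomputable def codeRank {q n : ℕ} (C : Submodule (ZMod q) (Fin n → ZMod q)) : ℕ :=
  sInf {m | ∃ s : Finset (Fin n → ZMod q), s.card = m ∧
    Submodule.span (ZMod q) (↑s : Set (Fin n → ZMod q)) = C}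

/-- `PhiR n K q`: the maximum minimum Lee distance over rank-`K` linear codes of
length `n` over `ZMod q`. -/
noncomputable def PhiR (n K q : ℕ) : ℕ :=
  sSup {d | ∃ C : Submodule (ZMod q) (Fin n → ZMod q), codeRank C = K ∧ minLee C = d}

/-!
Write `R = ℤ/p^t` and `c = p^(t-1)`. The code `{x | p • x = 0} = c • R^K` has minimum Lee
distance `c`: its nonzero coordinates are nonzero multiples of `c`, whose Lee weight is at least
`c`. It needs `K` generators, since it has at least `p^K` elements while `s` elements killed by `p`
span at most `p^|s|`.

Conversely, over the principal ideal ring `R` a submodule of `R^n` is generated by `n` elements.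
Every nonzero `a ∈ R` has a multiple equal to `c`, so a code `C` of length `K` not containing
`c • eᵢ` meets the `i`-th coordinate axis trivially; dropping that coordinate embeds `C` into
`R^(K-1)`, and `C` has rank less than `K`. Hence every code of rank `K` contains `c • eᵢ`, of Lee
weight `c`.
-/

open Submodule

instance (n : ℕ) : IsPrincipalIdealRing (ZMod n) :=
  IsPrincipalIdealRing.of_surjective (Int.castRingHom (ZMod n)) ZMod.intCast_surjective

namespace Submodule

variable {R M : Type*} [CommRing R] [IsPrincipalIdealRing R] [AddCommGroup M] [Module R M]

theorem exists_finset_card_le_span_eq_of_le_span (s : Finset M) {P : Submodule R M}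
    (hP : P ≤ span R s) : ∃ u : Finset M, u.card ≤ s.card ∧ span R u = P := by
  classical
  induction s using Finset.induction_on generalizing P with
  | empty => exact ⟨∅, le_rfl, by simpa [eq_comm] using hP⟩
  | insert x s hx ih =>
    obtain ⟨u, hu, hspan⟩ := ih (P := P ⊓ span R s) inf_le_right
    -- `x`-coefficients of the elements of `P`, taken modulo `span R s`
    obtain ⟨a, ha⟩ :=
      IsPrincipal.principal ((P ⊔ span R s).comap (LinearMap.toSpanSingleton R M x))
    obtain ⟨y, hyP, m, hm, hy⟩ := mem_sup.mp (show a • x ∈ P ⊔ span R s from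
      (ha.symm ▸ mem_span_singleton_self a :))
    refine ⟨insert y u, (Finset.card_insert_le _ _).trans (by simpa [hx] using hu), ?_⟩
    rw [Finset.coe_insert, span_insert, hspan]
    refine le_antisymm (sup_le ((span_singleton_le_iff_mem _ _).mpr hyP) inf_le_left)
      fun z hz ↦ ?_
    have hz' := hP hz
    rw [Finset.coe_insert, span_insert] at hz'
    obtain ⟨_, hrx, n, hn, rfl⟩ := mem_sup.mp hz'
    obtain ⟨r, rfl⟩ := mem_span_singleton.mp hrx
    have hr : r ∈ R ∙ a := by
      rw [← ha]
      show r • x ∈ P ⊔ span R s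
      simpa using add_mem (mem_sup_left hz) (mem_sup_right (neg_mem hn) : -n ∈ P ⊔ span R s)
    obtain ⟨c, rfl⟩ := mem_span_singleton.mp hr
    refine mem_sup.mpr ⟨c • y, smul_mem _ _ (mem_span_singleton_self y), _,
      ⟨sub_mem hz (P.smul_mem c hyP), ?_⟩, add_sub_cancel _ _⟩
    have hdiff : (c • a) • x + n - c • y = n + c • m := by
      rw [smul_assoc, ← hy, smul_add]; abel
    rw [SetLike.mem_coe, hdiff]
    exact add_mem hn (smul_mem _ _ hm)

theorem spanFinrank_le_card_of_le_span (s : Finset M) {P : Submodule R M}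
    (hP : P ≤ span R s) : P.spanFinrank ≤ s.card := by
  obtain ⟨u, hu, rfl⟩ := exists_finset_card_le_span_eq_of_le_span s hP
  exact (spanFinrank_span_le_ncard_of_finite u.finite_toSet).trans (by rwa [Set.ncard_coe_finset])

theorem spanFinrank_le_card {ι : Type*} [Fintype ι] (P : Submodule R (ι → R)) :
    P.spanFinrank ≤ Fintype.card ι := by
  classical
  refine (spanFinrank_le_card_of_le_span (Finset.univ.image (Pi.basisFun R ι)) ?_).trans
    Finset.card_image_le
  rw [Finset.coe_image, Finset.coe_univ, Set.image_univ, (Pi.basisFun R ι).span_eq]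
  exact le_top

end Submodule

theorem codeRank_eq_spanFinrank {q n : ℕ} (C : Submodule (ZMod q) (Fin n → ZMod q)) :
    codeRank C = C.spanFinrank := by
  rw [spanFinrank_eq_iInf, iInf, codeRank]
  congr 1
  ext m
  simp only [Set.mem_ofPred_eq, Set.mem_range, Subtype.exists, exists_prop]
  exact exists_congr fun s ↦ and_comm

section LeeWeight

variable {q : ℕ}

theorem leeWt_zero : leeWt (0 : ZMod q) = 0 := by
  simp [leeWt]

theorem leeWt_natCast [NeZero q] {k : ℕ} (hk : 2 * k ≤ q) : leeWt (k : ZMod q) = k := by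
  have hkq : k < q := by have := NeZero.pos q; omega
  rw [leeWt, ZMod.val_natCast_of_lt hkq]
  omega

theorem le_leeWt_of_mul_eq_zero [NeZero q] {p m : ℕ} (hq : p * m = q) {a : ZMod q}
    (ha : a ≠ 0) (hpa : (p : ZMod q) * a = 0) : m ≤ leeWt a := by
  subst hq
  have hp : p ≠ 0 := left_ne_zero_of_mul (NeZero.ne (p * m))
  have hm : m ∣ a.val := by
    rw [← ZMod.natCast_zmod_val a, ← Nat.cast_mul, ZMod.natCast_eq_zero_iff] at hpa
    exact Nat.dvd_of_mul_dvd_mul_left (Nat.pos_of_ne_zero hp) hpa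
  have hval : 0 < a.val := Nat.pos_of_ne_zero ((ZMod.val_ne_zero a).mpr ha)
  have hlt : a.val < p * m := ZMod.val_lt a
  have hm' : m ∣ p * m - a.val := Nat.dvd_sub (dvd_mul_left m p) hm
  exact le_min (Nat.le_of_dvd hval hm) (Nat.le_of_dvd (by omega) hm')

variable {n : ℕ}

theorem leeWt_le_leeWtVec (x : Fin n → ZMod q) (i : Fin n) : leeWt (x i) ≤ leeWtVec x :=
  Finset.single_le_sum (f := fun j ↦ leeWt (x j)) (fun _ _ ↦ Nat.zero_le _) (Finset.mem_univ i)

theorem leeWtVec_single (i : Fin n) (a : ZMod q) : leeWtVec (Pi.single i a) = leeWt a := by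
  rw [leeWtVec, Fintype.sum_eq_single i fun j hj ↦ by rw [Pi.single_eq_of_ne hj, leeWt_zero],
    Pi.single_eq_same]

theorem minLee_le {C : Submodule (ZMod q) (Fin n → ZMod q)} {x : Fin n → ZMod q} (hx : x ∈ C)
    (hx0 : x ≠ 0) : minLee C ≤ leeWtVec x :=
  Nat.sInf_le ⟨x, hx, hx0, rfl⟩

theorem card_span_le_pow [NeZero q] {M : Type*} [AddCommGroup M] [Module (ZMod q) M] {m : ℕ}
    [NeZero m] (s : Finset M) (hs : ∀ x ∈ s, m • x = 0) :
    Nat.card (span (ZMod q) (s : Set M)) ≤ m ^ s.card := by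
  let φ : (s → Fin m) → M := fun f ↦ ∑ x : s, (f x : ℕ) • (x : M)
  have hrange : (span (ZMod q) (s : Set M) : Set M) ⊆ Set.range φ := by
    intro z hz
    obtain ⟨g, -, rfl⟩ := mem_span_finset.mp hz
    refine ⟨fun x ↦ ⟨(g x).val % m, Nat.mod_lt _ (NeZero.pos m)⟩, ?_⟩
    rw [← Finset.sum_coe_sort s]
    refine Finset.sum_congr rfl fun x _ ↦ ?_
    rw [← nsmul_eq_mod_nsmul _ (hs x x.2), ← Nat.cast_smul_eq_nsmul (ZMod q),
      ZMod.natCast_zmod_val]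
  calc Nat.card (span (ZMod q) (s : Set M))
      ≤ Nat.card (Set.range φ) := Nat.card_mono (Set.finite_range φ) hrange
    _ ≤ Nat.card (s → Fin m) := Finite.card_range_le φ
    _ = m ^ s.card := by simp [Nat.card_fun]

end LeeWeight

section PrimePower

variable {p t : ℕ} {ι : Type*}

theorem single_mem_torsionBy [DecidableEq ι] (i : ι) :
    Pi.single i ((p ^ t : ℕ) : ZMod (p ^ (t + 1))) ∈
      torsionBy (ZMod (p ^ (t + 1))) (ι → ZMod (p ^ (t + 1))) p := by
  rw [mem_torsionBy_iff, ← Pi.single_smul, smul_eq_mul, ← Nat.cast_mul, ← pow_succ',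
    ZMod.natCast_self, Pi.single_zero]

variable [hp : Fact p.Prime]

theorem exists_mul_eq_natCast_pow {a : ZMod (p ^ (t + 1))} (ha : a ≠ 0) :
    ∃ r, r * a = ((p ^ t : ℕ) : ZMod (p ^ (t + 1))) := by
  obtain ⟨e, m, hpm, hval⟩ :=
    Nat.exists_eq_pow_mul_and_not_dvd ((ZMod.val_ne_zero a).mpr ha) p hp.out.one_lt.ne'
  have hm : m ≠ 0 := by rintro rfl; exact hpm (dvd_zero p)
  have het : e < t + 1 := (Nat.pow_lt_pow_iff_right hp.out.one_lt).mp <|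
    (Nat.le_mul_of_pos_right _ (Nat.pos_of_ne_zero hm)).trans_lt (hval ▸ ZMod.val_lt a)
  have hcop : m.Coprime (p ^ (t + 1)) :=
    ((hp.out.coprime_iff_not_dvd).mpr hpm).symm.pow_right (t + 1)
  let u := ZMod.unitOfCoprime m hcop
  refine ⟨(p : ZMod (p ^ (t + 1))) ^ (t - e) * ↑u⁻¹, ?_⟩
  rw [← ZMod.natCast_zmod_val a, hval]
  have hu : (↑u⁻¹ : ZMod (p ^ (t + 1))) * m = 1 := by
    rw [← ZMod.coe_unitOfCoprime m hcop, Units.inv_mul]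
  push_cast
  calc (p : ZMod (p ^ (t + 1))) ^ (t - e) * ↑u⁻¹ * (p ^ e * m)
      = p ^ (t - e + e) * (↑u⁻¹ * m) := by ring
    _ = p ^ t := by rw [hu, Nat.sub_add_cancel (Nat.le_of_lt_succ het), mul_one]

theorem natCast_pow_ne_zero : ((p ^ t : ℕ) : ZMod (p ^ (t + 1))) ≠ 0 := by
  rw [Ne, ZMod.natCast_eq_zero_iff, Nat.pow_dvd_pow_iff_le_right hp.out.one_lt]
  omega

theorem leeWt_natCast_pow : leeWt ((p ^ t : ℕ) : ZMod (p ^ (t + 1))) = p ^ t :=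
  leeWt_natCast (by rw [pow_succ']; exact Nat.mul_le_mul_right _ hp.out.two_le)

theorem minLee_le_of_single_mem {n : ℕ}
    {C : Submodule (ZMod (p ^ (t + 1))) (Fin n → ZMod (p ^ (t + 1)))} {i : Fin n}
    (hC : Pi.single i ((p ^ t : ℕ) : ZMod (p ^ (t + 1))) ∈ C) : minLee C ≤ p ^ t :=
  calc minLee C ≤ leeWtVec (Pi.single i ((p ^ t : ℕ) : ZMod (p ^ (t + 1)))) :=
        minLee_le hC (by simpa using natCast_pow_ne_zero)
    _ = p ^ t := by rw [leeWtVec_single, leeWt_natCast_pow]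

theorem minLee_torsionBy {K : ℕ} [NeZero K] :
    minLee (torsionBy (ZMod (p ^ (t + 1))) (Fin K → ZMod (p ^ (t + 1))) p) = p ^ t := by
  refine le_antisymm (minLee_le_of_single_mem (single_mem_torsionBy 0)) ?_
  refine le_csInf ⟨_, _, single_mem_torsionBy 0, by simpa using natCast_pow_ne_zero, rfl⟩ ?_
  rintro _ ⟨x, hx, hx0, rfl⟩
  obtain ⟨j, hj⟩ := Function.ne_iff.mp hx0
  have hpx : (p : ZMod (p ^ (t + 1))) * x j = 0 := congrFun ((mem_torsionBy_iff _ _).mp hx) j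
  exact (le_leeWt_of_mul_eq_zero (pow_succ' p t).symm hj hpx).trans (leeWt_le_leeWtVec x j)

theorem pow_card_le_card_torsionBy [Fintype ι] :
    p ^ Fintype.card ι ≤
      Nat.card (torsionBy (ZMod (p ^ (t + 1))) (ι → ZMod (p ^ (t + 1))) p) := by
  have hlt (k : Fin p) : (k : ℕ) * p ^ t < p ^ (t + 1) := by
    rw [pow_succ']; exact Nat.mul_lt_mul_of_pos_right k.isLt (pow_pos hp.out.pos t)
  let g : (ι → Fin p) → torsionBy (ZMod (p ^ (t + 1))) (ι → ZMod (p ^ (t + 1))) p :=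
    fun f ↦ ⟨fun i ↦ ((f i * p ^ t : ℕ) : ZMod (p ^ (t + 1))), by
      rw [mem_torsionBy_iff]
      funext i
      rw [Pi.smul_apply, smul_eq_mul, ← Nat.cast_mul, mul_left_comm, ← pow_succ', Nat.cast_mul,
        ZMod.natCast_self, mul_zero, Pi.zero_apply]⟩
  have hg : Function.Injective g := fun f f' h ↦ funext fun i ↦ by
    have := congrArg ZMod.val (congrFun (congrArg Subtype.val h) i)
    rw [ZMod.val_natCast_of_lt (hlt _), ZMod.val_natCast_of_lt (hlt _)] at this
    exact Fin.ext (Nat.eq_of_mul_eq_mul_right (pow_pos hp.out.pos t) this)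
  simpa [Nat.card_fun] using Nat.card_le_card_of_injective g hg

theorem spanFinrank_torsionBy [Fintype ι] :
    (torsionBy (ZMod (p ^ (t + 1))) (ι → ZMod (p ^ (t + 1))) p).spanFinrank =
      Fintype.card ι := by
  refine le_antisymm (spanFinrank_le_card _) ?_
  obtain ⟨s, hs, hspan⟩ := FG.exists_span_finset_card_eq_spanFinrank
    (IsNoetherian.noetherian (torsionBy (ZMod (p ^ (t + 1))) (ι → ZMod (p ^ (t + 1))) p))
  have hps : ∀ x ∈ s, p • x = 0 := fun x hx ↦ by
    rw [← Nat.cast_smul_eq_nsmul (ZMod (p ^ (t + 1))), ← mem_torsionBy_iff, ← hspan]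
    exact subset_span hx
  have hcard := pow_card_le_card_torsionBy.trans (hspan ▸ card_span_le_pow s hps)
  rw [← hs]
  exact (Nat.pow_le_pow_iff_right hp.out.one_lt).mp hcard

theorem spanFinrank_lt_card_of_single_notMem [Fintype ι] [DecidableEq ι]
    {C : Submodule (ZMod (p ^ (t + 1))) (ι → ZMod (p ^ (t + 1)))} {i : ι}
    (hC : Pi.single i ((p ^ t : ℕ) : ZMod (p ^ (t + 1))) ∉ C) :
    C.spanFinrank < Fintype.card ι := by
  let f := LinearMap.funLeft (ZMod (p ^ (t + 1))) (ZMod (p ^ (t + 1)))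
    (Subtype.val : {j // j ≠ i} → ι)
  have hinj : Function.Injective (f ∘ₗ C.subtype) := by
    refine (injective_iff_map_eq_zero _).mpr fun ⟨x, hxC⟩ hx ↦ ?_
    have hx_single : x = Pi.single i (x i) := funext fun j ↦ by
      by_cases hj : j = i
      · subst hj; simp
      · simpa [hj, f] using congrFun hx ⟨j, hj⟩
    by_cases hxi : x i = 0
    · exact Subtype.ext (show x = 0 by rw [hx_single, hxi, Pi.single_zero])
    · obtain ⟨r, hr⟩ := exists_mul_eq_natCast_pow hxi
      refine absurd ?_ hC
      rw [← hr, ← smul_eq_mul, Pi.single_smul, ← hx_single]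
      exact C.smul_mem r hxC
  calc C.spanFinrank = ((⊤ : Submodule _ C).map (f ∘ₗ C.subtype)).spanFinrank := by
        rw [spanFinrank_map_eq_of_injective _ hinj, spanFinrank_top]
    _ ≤ Fintype.card {j // j ≠ i} := spanFinrank_le_card _
    _ < Fintype.card ι := Fintype.card_subtype_lt (p := (· ≠ i)) (x := i) (by simp)

end PrimePower

theorem phiR_K_K_eq (p t K : ℕ) (hp : p.Prime) (ht : 1 ≤ t) (hK : 1 ≤ K) :
    PhiR K K (p ^ t) = p ^ (t - 1) := by
  obtain ⟨t, rfl⟩ : ∃ s, t = s + 1 := ⟨t - 1, by omega⟩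
  have : Fact p.Prime := ⟨hp⟩
  have : NeZero K := ⟨by omega⟩
  rw [Nat.add_sub_cancel]
  refine IsGreatest.csSup_eq ⟨⟨_, ?_, minLee_torsionBy⟩, ?_⟩
  · rw [codeRank_eq_spanFinrank, spanFinrank_torsionBy, Fintype.card_fin]
  · rintro _ ⟨C, hC, rfl⟩
    refine minLee_le_of_single_mem (i := 0) (by_contra fun h ↦ ?_)
    simpa [← codeRank_eq_spanFinrank, hC] using spanFinrank_lt_card_of_single_notMem h
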